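/- arXiv:2206.09254 — 2 statements merged into one kernel-verified Lean document; each statement's English description precedes it below -/
import Mathlib

section
/- Let π^μ be a stationary point of the replicator–mutator dynamics with mutation parameter μ > 0 and reference strategies c_i ∈ Δ°(A_i). Then for every player i ∈ {1,2} and every strategy π_i' ∈ Δ(A_i), v_i^{π_i', π_{−i}^μ} = v_i^{π^μ} + μ − μ Σ_{a_i∈A_i} c_i(a_i) π_i'(a_i)/π_i^μ(a_i). -/
/-!
Dividing the stationarity condition by `π_i^μ(a_i)`, which cannot vanish since otherwise
`μ c_i(a_i) = 0`, gives `q_i(a_i) = v_i + μ - μ c_i(a_i) / π_i^μ(a_i)` for every action.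
Averaging this against `π_i'` yields the claim, because `v_i^{π_i', π_{-i}^μ}` is the
`π_i'`-average of the conditional payoffs `q_i`.
-/

open Finset

noncomputable section

variable {A1 A2 : Type*}

/-- Expected utility of the strategy profile `(p1, p2)` under utility function `u`. -/
def eV [Fintype A1] [Fintype A2] (u : A1 → A2 → ℝ) (p1 : A1 → ℝ) (p2 : A2 → ℝ) : ℝ :=
  ∑ a1, ∑ a2, p1 a1 * p2 a2 * u a1 a2

/-- Conditional expected utility of action `a1` for player 1. -/
def cV1 [Fintype A2] (u : A1 → A2 → ℝ) (p2 : A2 → ℝ) (a1 : A1) : ℝ :=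
  ∑ a2, p2 a2 * u a1 a2

/-- Conditional expected utility of action `a2` for player 2. -/
def cV2 [Fintype A1] (u : A1 → A2 → ℝ) (p1 : A1 → ℝ) (a2 : A2) : ℝ :=
  ∑ a1, p1 a1 * u a1 a2

/-- Kullback–Leibler divergence (with the convention `0 ln 0 = 0`,
which holds since `Real.log 0 = 0` in Lean). -/
def KLd {A : Type*} [Fintype A] (p q : A → ℝ) : ℝ :=
  ∑ a, p a * Real.log (p a / q a)

/-- Bregman divergence associated with a differentiable function `ψ`. -/
def breg {A : Type*} [Fintype A] (ψ : (A → ℝ) → ℝ) (x y : A → ℝ) : ℝ :=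
  ψ x - ψ y - fderiv ℝ ψ y (x - y)

/-- Euclidean inner product on `A → ℝ`. -/
def ip {A : Type*} [Fintype A] (z p : A → ℝ) : ℝ := ∑ a, z a * p a

namespace ReplicatorMutator

variable {A : Type*} {q p c : A → ℝ} {v μ : ℝ}

theorem ne_zero_of_stationary (hμ : μ ≠ 0) (hc : ∀ a, c a ≠ 0)
    (hst : ∀ a, p a * (q a - v) + μ * (c a - p a) = 0) (a : A) : p a ≠ 0 := by
  intro hpa
  have := hst a
  rw [hpa, zero_mul, zero_add, sub_zero] at this
  exact mul_ne_zero hμ (hc a) this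

theorem payoff_eq_of_stationary (hμ : μ ≠ 0) (hc : ∀ a, c a ≠ 0)
    (hst : ∀ a, p a * (q a - v) + μ * (c a - p a) = 0) (a : A) :
    q a = v + μ - μ * c a / p a := by
  have hpa := ne_zero_of_stationary hμ hc hst a
  field_simp
  linear_combination hst a

theorem sum_mul_payoff_eq_of_stationary [Fintype A] (hμ : μ ≠ 0) (hc : ∀ a, c a ≠ 0)
    (hst : ∀ a, p a * (q a - v) + μ * (c a - p a) = 0) {p' : A → ℝ} (hp' : ∑ a, p' a = 1) :
    ∑ a, p' a * q a = v + μ - μ * ∑ a, c a * p' a / p a := by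
  calc ∑ a, p' a * q a = ∑ a, ((v + μ) * p' a - μ * (c a * p' a / p a)) := by
        refine sum_congr rfl fun a _ => ?_
        rw [payoff_eq_of_stationary hμ hc hst a]
        ring
    _ = v + μ - μ * ∑ a, c a * p' a / p a := by
        rw [sum_sub_distrib, ← mul_sum, ← mul_sum, hp', mul_one]

end ReplicatorMutator

theorem eV_eq_sum_mul_cV1 [Fintype A1] [Fintype A2] (u : A1 → A2 → ℝ) (p1 : A1 → ℝ)
    (p2 : A2 → ℝ) : eV u p1 p2 = ∑ a1, p1 a1 * cV1 u p2 a1 := by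
  simp only [eV, cV1, mul_sum, mul_assoc]

theorem eV_eq_sum_mul_cV2 [Fintype A1] [Fintype A2] (u : A1 → A2 → ℝ) (p1 : A1 → ℝ)
    (p2 : A2 → ℝ) : eV u p1 p2 = ∑ a2, p2 a2 * cV2 u p1 a2 := by
  rw [eV, sum_comm]
  simp only [cV2, mul_sum]
  exact sum_congr rfl fun _ _ => sum_congr rfl fun _ _ => by ring

theorem rmd_stationary_value_general
    [Fintype A1] [Fintype A2]
    (u1 u2 : A1 → A2 → ℝ)
    (μ : ℝ) (hμ : 0 < μ)
    (c1 : A1 → ℝ) (c2 : A2 → ℝ)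
    (hc1pos : ∀ a, 0 < c1 a)
    (hc2pos : ∀ a, 0 < c2 a)
    (π1μ : A1 → ℝ) (π2μ : A2 → ℝ)
    (hst1 : ∀ a, π1μ a * (cV1 u1 π2μ a - eV u1 π1μ π2μ) + μ * (c1 a - π1μ a) = 0)
    (hst2 : ∀ a, π2μ a * (cV2 u2 π1μ a - eV u2 π1μ π2μ) + μ * (c2 a - π2μ a) = 0) :
    (∀ π1' ∈ stdSimplex ℝ A1,
      eV u1 π1' π2μ = eV u1 π1μ π2μ + μ - μ * ∑ a, c1 a * π1' a / π1μ a) ∧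
    (∀ π2' ∈ stdSimplex ℝ A2,
      eV u2 π1μ π2' = eV u2 π1μ π2μ + μ - μ * ∑ a, c2 a * π2' a / π2μ a) :=
  ⟨fun _ hπ1' => (eV_eq_sum_mul_cV1 u1 _ π2μ).trans <|
      ReplicatorMutator.sum_mul_payoff_eq_of_stationary hμ.ne' (fun a => (hc1pos a).ne') hst1
        hπ1'.2,
    fun _ hπ2' => (eV_eq_sum_mul_cV2 u2 π1μ _).trans <|
      ReplicatorMutator.sum_mul_payoff_eq_of_stationary hμ.ne' (fun a => (hc2pos a).ne') hst2
        hπ2'.2⟩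

/-- **Lemma 2.** Let `π^μ` be a stationary point of the replicator–mutator
dynamics. Then for every player `i` and every strategy `π_i' ∈ Δ(A_i)`,
`v_i^{π_i', π_{−i}^μ} = v_i^{π^μ} + μ − μ Σ_{a_i} c_i(a_i) π_i'(a_i)/π_i^μ(a_i)`. -/
theorem rmd_stationary_value
    [Fintype A1] [Fintype A2]
    (u1 u2 : A1 → A2 → ℝ) (hzs : ∀ a1 a2, u2 a1 a2 = -u1 a1 a2)
    (μ : ℝ) (hμ : 0 < μ)
    (c1 : A1 → ℝ) (c2 : A2 → ℝ)
    (hc1 : c1 ∈ stdSimplex ℝ A1) (hc1pos : ∀ a, 0 < c1 a)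
    (hc2 : c2 ∈ stdSimplex ℝ A2) (hc2pos : ∀ a, 0 < c2 a)
    (π1μ : A1 → ℝ) (π2μ : A2 → ℝ)
    (hπ1μ : π1μ ∈ stdSimplex ℝ A1) (hπ2μ : π2μ ∈ stdSimplex ℝ A2)
    (hst1 : ∀ a, π1μ a * (cV1 u1 π2μ a - eV u1 π1μ π2μ) + μ * (c1 a - π1μ a) = 0)
    (hst2 : ∀ a, π2μ a * (cV2 u2 π1μ a - eV u2 π1μ π2μ) + μ * (c2 a - π2μ a) = 0) :
    (∀ π1' ∈ stdSimplex ℝ A1,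
      eV u1 π1' π2μ = eV u1 π1μ π2μ + μ - μ * ∑ a, c1 a * π1' a / π1μ a) ∧
    (∀ π2' ∈ stdSimplex ℝ A2,
      eV u2 π1μ π2' = eV u2 π1μ π2μ + μ - μ * ∑ a, c2 a * π2' a / π2μ a) :=
  rmd_stationary_value_general u1 u2 μ hμ c1 c2 hc1pos hc2pos π1μ π2μ hst1 hst2
end
end

section
/- Let t ↦ π^t be a differentiable trajectory in Δ°(A₁) × Δ°(A₂) following the replicator–mutator dynamics with mutation parameter μ > 0 and reference strategies c_i ∈ Δ°(A_i), and let π^μ be a stationary point of these dynamics. Then the map t ↦ KL(π^μ, π^t) is differentiable and d/dt KL(π^μ, π^t) = −μ Σ_{i=1}^{2} Σ_{a_i∈A_i} c_i(a_i) (√(π_i^t(a_i)/π_i^μ(a_i)) − √(π_i^μ(a_i)/π_i^t(a_i)))². In particular the derivative is nonpositive, and it is zero if and only if π^t = π^μ. -/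
/-! Write `r = π^μ` and `p = π^t`. Since `d/dt KL(r, p) = -Σ_a r(a) ṗ(a) / p(a)`, inserting the
dynamics gives, for each player, the cross term `⟨p - r, q^p - q^r⟩` minus
`μ Σ_a c(a) (√(p/r) - √(r/p))²`, once stationarity is used in the form
`q^r(a) = v^r - μ (c(a) / r(a) - 1)`. The two cross terms are `u₁(p₁ - r₁, p₂ - r₂)` and
`u₂(p₁ - r₁, p₂ - r₂)`, which cancel because the game is zero-sum. -/

open Finset

noncomputable section

variable {A1 A2 : Type*}

/-- The right-hand side of the replicator–mutator dynamics for one player with strategy `p`,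
payoff vector `f` and average payoff `v`. -/
def rmdField {A : Type*} (μ : ℝ) (c p f : A → ℝ) (v : ℝ) (a : A) : ℝ :=
  p a * (f a - v) + μ * (c a - p a)

theorem sqrt_div_sub_sqrt_div_sq {x y : ℝ} (hx : 0 < x) (hy : 0 < y) :
    (√(x / y) - √(y / x)) ^ 2 = (x - y) ^ 2 / (x * y) := by
  have hxy : √(x / y) * √(y / x) = 1 := by
    rw [← Real.sqrt_mul (by positivity), show x / y * (y / x) = 1 by field_simp, Real.sqrt_one]
  calc (√(x / y) - √(y / x)) ^ 2 = √(x / y) ^ 2 + √(y / x) ^ 2 - 2 * (√(x / y) * √(y / x)) := by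
        ring
    _ = x / y + y / x - 2 := by
        rw [Real.sq_sqrt (by positivity), Real.sq_sqrt (by positivity), hxy, mul_one]
    _ = (x - y) ^ 2 / (x * y) := by
        field_simp
        ring

theorem pos_of_rmdField_eq_zero {A : Type*} {μ : ℝ} {c r g : A → ℝ} {w : ℝ} {a : A} (hμ : 0 < μ)
    (hc : 0 < c a) (hr : 0 ≤ r a) (hst : rmdField μ c r g w a = 0) : 0 < r a := by
  refine hr.lt_of_ne fun h0 => ?_
  rw [rmdField, ← h0, zero_mul, zero_add, sub_zero] at hst
  exact (mul_pos hμ hc).ne' hst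

section OnePopulation

variable {A : Type*} [Fintype A] {μ : ℝ} {c p q r f g : A → ℝ} {v w : ℝ}

theorem hasDerivAt_KLd_right {p : ℝ → A → ℝ} {p' : A → ℝ} {t : ℝ} (hp : ∀ a, p t a ≠ 0)
    (hderiv : ∀ a, HasDerivAt (fun s => p s a) (p' a) t) :
    HasDerivAt (fun s => KLd r (p s)) (-∑ a, r a * p' a / p t a) t := by
  simp only [KLd, ← sum_neg_distrib]
  refine HasDerivAt.fun_sum fun a _ => ?_
  by_cases hr : r a = 0
  · simpa [hr] using hasDerivAt_const t (0 : ℝ)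
  have hlog : (fun s => r a * Real.log (r a / p s a)) = fun s => r a * -Real.log (p s a / r a) := by
    simp only [← Real.log_inv, inv_div]
  rw [hlog]
  have hlog' := ((hderiv a).div_const (r a)).log (div_ne_zero (hp a) hr)
  refine (hlog'.fun_neg.const_mul (r a)).congr_deriv ?_
  field_simp

theorem sum_mul_rmdField_div (hp : ∀ a, p a ≠ 0) (hq : ∑ a, q a = 1) :
    ∑ a, q a * rmdField μ c p f v a / p a
      = ∑ a, q a * f a - v + μ * (∑ a, q a * c a / p a - 1) := by
  have hterm : ∀ a, q a * rmdField μ c p f v a / p a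
      = q a * f a - v * q a + μ * (q a * c a / p a) - μ * q a := by
    intro a
    rw [rmdField]
    field_simp [hp a]
    ring
  simp only [hterm, sum_add_distrib, sum_sub_distrib, ← mul_sum, hq]
  ring

theorem sum_mul_sqrt_div_sub_sq (hc : ∑ a, c a = 1) (hp : ∀ a, 0 < p a) (hr : ∀ a, 0 < r a) :
    ∑ a, c a * (√(p a / r a) - √(r a / p a)) ^ 2
      = ∑ a, p a * c a / r a + ∑ a, r a * c a / p a - 2 := by
  have hterm : ∀ a, c a * (√(p a / r a) - √(r a / p a)) ^ 2
      = p a * c a / r a + r a * c a / p a - 2 * c a := by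
    intro a
    rw [sqrt_div_sub_sqrt_div_sq (hp a) (hr a)]
    field_simp [(hp a).ne', (hr a).ne']
    ring
  simp only [hterm, sum_add_distrib, sum_sub_distrib, ← mul_sum, hc, mul_one]

theorem sum_mul_sqrt_div_sub_sq_nonneg (hc : ∀ a, 0 ≤ c a) :
    0 ≤ ∑ a, c a * (√(p a / r a) - √(r a / p a)) ^ 2 :=
  sum_nonneg fun a _ => mul_nonneg (hc a) (sq_nonneg _)

theorem sum_mul_sqrt_div_sub_sq_eq_zero_iff (hc : ∀ a, 0 < c a) (hp : ∀ a, 0 < p a)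
    (hr : ∀ a, 0 < r a) :
    ∑ a, c a * (√(p a / r a) - √(r a / p a)) ^ 2 = 0 ↔ p = r := by
  have hterm : ∀ a, c a * (√(p a / r a) - √(r a / p a)) ^ 2 = 0 ↔ p a = r a := by
    intro a
    rw [sqrt_div_sub_sqrt_div_sq (hp a) (hr a), mul_eq_zero, div_eq_zero_iff,
      pow_eq_zero_iff two_ne_zero, sub_eq_zero]
    simp [(hc a).ne', (hp a).ne', (hr a).ne']
  rw [sum_eq_zero_iff_of_nonneg fun a _ => mul_nonneg (hc a).le (sq_nonneg _), funext_iff]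
  simp [hterm]

theorem neg_sum_mul_rmdField_div_eq (hc : ∑ a, c a = 1) (hp : ∀ a, 0 < p a) (hr : ∀ a, 0 < r a)
    (hp1 : ∑ a, p a = 1) (hr1 : ∑ a, r a = 1) (hv : ∑ a, p a * f a = v)
    (hst : ∀ a, rmdField μ c r g w a = 0) :
    -∑ a, r a * rmdField μ c p f v a / p a
      = ∑ a, (p a - r a) * (f a - g a) - μ * ∑ a, c a * (√(p a / r a) - √(r a / p a)) ^ 2 := by
  have hr0 : ∀ a, r a ≠ 0 := fun a => (hr a).ne'
  have hflow := sum_mul_rmdField_div (μ := μ) (c := c) (f := f) (v := v) (fun a => (hp a).ne') hr1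
  have hpg := sum_mul_rmdField_div (μ := μ) (c := c) (f := g) (v := w) hr0 hp1
  have hrg := sum_mul_rmdField_div (μ := μ) (c := c) (f := g) (v := w) hr0 hr1
  simp only [hst, mul_zero, zero_div, sum_const_zero] at hpg hrg
  simp only [mul_div_cancel_left₀ _ (hr0 _), hc, sub_self, mul_zero, add_zero] at hrg
  rw [sum_mul_sqrt_div_sub_sq hc hp hr]
  simp only [sub_mul, mul_sub, sum_sub_distrib]
  linarith

end OnePopulation

theorem cV1_sub [Fintype A2] (u : A1 → A2 → ℝ) (p q : A2 → ℝ) (a : A1) :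
    cV1 u p a - cV1 u q a = cV1 u (p - q) a := by
  simp only [cV1, ← sum_sub_distrib, Pi.sub_apply, sub_mul]

theorem cV2_sub [Fintype A1] (u : A1 → A2 → ℝ) (p q : A1 → ℝ) (a : A2) :
    cV2 u p a - cV2 u q a = cV2 u (p - q) a := by
  simp only [cV2, ← sum_sub_distrib, Pi.sub_apply, sub_mul]

theorem sum_mul_cV1 [Fintype A1] [Fintype A2] (u : A1 → A2 → ℝ) (p : A1 → ℝ) (q : A2 → ℝ) :
    ∑ a, p a * cV1 u q a = eV u p q := by
  simp only [eV, cV1, mul_sum, mul_assoc]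

theorem sum_mul_cV2 [Fintype A1] [Fintype A2] (u : A1 → A2 → ℝ) (p : A1 → ℝ) (q : A2 → ℝ) :
    ∑ a, q a * cV2 u p a = eV u p q := by
  rw [eV, sum_comm]
  simp only [cV2, mul_sum]
  exact sum_congr rfl fun _ _ => sum_congr rfl fun _ _ => by ring

theorem eV_eq_neg_of_zeroSum [Fintype A1] [Fintype A2] {u1 u2 : A1 → A2 → ℝ}
    (hzs : ∀ a1 a2, u2 a1 a2 = -u1 a1 a2) (p : A1 → ℝ) (q : A2 → ℝ) :
    eV u2 p q = -eV u1 p q := by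
  simp only [eV, hzs, mul_neg, sum_neg_distrib]

/-- Along a differentiable full-support trajectory of the
replicator–mutator dynamics, with `π^μ` a stationary point, `t ↦ KL(π^μ, π^t)` is
differentiable with
`d/dt KL(π^μ, π^t) = −μ Σ_i Σ_{a_i} c_i(a_i) (√(π_i^t(a_i)/π_i^μ(a_i)) − √(π_i^μ(a_i)/π_i^t(a_i)))²`;
in particular the derivative is nonpositive, and it is zero iff `π^t = π^μ`. -/
theorem rmd_kl_derivative_stationary
    [Fintype A1] [Fintype A2]
    (u1 u2 : A1 → A2 → ℝ) (hzs : ∀ a1 a2, u2 a1 a2 = -u1 a1 a2)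
    (μ : ℝ) (hμ : 0 < μ)
    (c1 : A1 → ℝ) (c2 : A2 → ℝ)
    (hc1 : c1 ∈ stdSimplex ℝ A1) (hc1pos : ∀ a, 0 < c1 a)
    (hc2 : c2 ∈ stdSimplex ℝ A2) (hc2pos : ∀ a, 0 < c2 a)
    (π1 : ℝ → A1 → ℝ) (π2 : ℝ → A2 → ℝ)
    (hmem1 : ∀ t, π1 t ∈ stdSimplex ℝ A1) (hpos1 : ∀ t a, 0 < π1 t a)
    (hmem2 : ∀ t, π2 t ∈ stdSimplex ℝ A2) (hpos2 : ∀ t a, 0 < π2 t a)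
    (hrmd1 : ∀ t a, HasDerivAt (fun s => π1 s a)
      (π1 t a * (cV1 u1 (π2 t) a - eV u1 (π1 t) (π2 t)) + μ * (c1 a - π1 t a)) t)
    (hrmd2 : ∀ t a, HasDerivAt (fun s => π2 s a)
      (π2 t a * (cV2 u2 (π1 t) a - eV u2 (π1 t) (π2 t)) + μ * (c2 a - π2 t a)) t)
    (π1μ : A1 → ℝ) (π2μ : A2 → ℝ)
    (hπ1μ : π1μ ∈ stdSimplex ℝ A1) (hπ2μ : π2μ ∈ stdSimplex ℝ A2)
    (hst1 : ∀ a, π1μ a * (cV1 u1 π2μ a - eV u1 π1μ π2μ) + μ * (c1 a - π1μ a) = 0)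
    (hst2 : ∀ a, π2μ a * (cV2 u2 π1μ a - eV u2 π1μ π2μ) + μ * (c2 a - π2μ a) = 0) :
    ∀ t,
      HasDerivAt (fun s => KLd π1μ (π1 s) + KLd π2μ (π2 s))
        (-μ * ((∑ a, c1 a * (Real.sqrt (π1 t a / π1μ a) - Real.sqrt (π1μ a / π1 t a)) ^ 2) +
               (∑ a, c2 a * (Real.sqrt (π2 t a / π2μ a) - Real.sqrt (π2μ a / π2 t a)) ^ 2))) t ∧
      (-μ * ((∑ a, c1 a * (Real.sqrt (π1 t a / π1μ a) - Real.sqrt (π1μ a / π1 t a)) ^ 2) +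
             (∑ a, c2 a * (Real.sqrt (π2 t a / π2μ a) - Real.sqrt (π2μ a / π2 t a)) ^ 2)) ≤ 0) ∧
      ((-μ * ((∑ a, c1 a * (Real.sqrt (π1 t a / π1μ a) - Real.sqrt (π1μ a / π1 t a)) ^ 2) +
              (∑ a, c2 a * (Real.sqrt (π2 t a / π2μ a) - Real.sqrt (π2μ a / π2 t a)) ^ 2)) = 0 ↔
        (π1 t = π1μ ∧ π2 t = π2μ))) := by
  intro t
  have hr1 : ∀ a, 0 < π1μ a := fun a => pos_of_rmdField_eq_zero hμ (hc1pos a) (hπ1μ.1 a) (hst1 a)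
  have hr2 : ∀ a, 0 < π2μ a := fun a => pos_of_rmdField_eq_zero hμ (hc2pos a) (hπ2μ.1 a) (hst2 a)
  have hderiv := (hasDerivAt_KLd_right (r := π1μ) (fun a => (hpos1 t a).ne') (hrmd1 t)).add
    (hasDerivAt_KLd_right (r := π2μ) (fun a => (hpos2 t a).ne') (hrmd2 t))
  have hplayer1 := neg_sum_mul_rmdField_div_eq hc1.2 (hpos1 t) hr1 (hmem1 t).2 hπ1μ.2
    (sum_mul_cV1 u1 (π1 t) (π2 t)) hst1
  have hplayer2 := neg_sum_mul_rmdField_div_eq hc2.2 (hpos2 t) hr2 (hmem2 t).2 hπ2μ.2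
    (sum_mul_cV2 u2 (π1 t) (π2 t)) hst2
  simp only [rmdField] at hplayer1 hplayer2
  have hcross : ∑ a, (π1 t a - π1μ a) * (cV1 u1 (π2 t) a - cV1 u1 π2μ a)
      + ∑ a, (π2 t a - π2μ a) * (cV2 u2 (π1 t) a - cV2 u2 π1μ a) = 0 := by
    simp only [cV1_sub, cV2_sub, ← Pi.sub_apply (π1 t), ← Pi.sub_apply (π2 t), sum_mul_cV1,
      sum_mul_cV2, eV_eq_neg_of_zeroSum hzs, add_neg_cancel]
  have hS1 := sum_mul_sqrt_div_sub_sq_eq_zero_iff hc1pos (hpos1 t) hr1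
  have hS2 := sum_mul_sqrt_div_sub_sq_eq_zero_iff hc2pos (hpos2 t) hr2
  have hS1nonneg := sum_mul_sqrt_div_sub_sq_nonneg (p := π1 t) (r := π1μ) fun a => (hc1pos a).le
  have hS2nonneg := sum_mul_sqrt_div_sub_sq_nonneg (p := π2 t) (r := π2μ) fun a => (hc2pos a).le
  refine ⟨hderiv.congr_deriv (by linear_combination hplayer1 + hplayer2 + hcross),
    mul_nonpos_of_nonpos_of_nonneg (neg_nonpos.2 hμ.le) (add_nonneg hS1nonneg hS2nonneg), ?_⟩
  rw [mul_eq_zero, neg_eq_zero, add_eq_zero_iff_of_nonneg hS1nonneg hS2nonneg, hS1, hS2]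
  simp [hμ.ne']
end
end
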